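/- The scoring rule with scores s_j = −j(j−1)/2 for position j (score differences s_j − s_{j+1} = −j) never ranks a majority loser first: for all k ≥ 2, a majority loser's total over n races is strictly less than −n·k(k−1)/4, which is at most the average total score n(1−k²)/6. -/

import Mathlib

/-!
Every score is `≤ 0`, and in more than half of the races the majority loser gets the lowest score
`-k(k-1)/2`, so its total is below `-n·k(k-1)/4`. Each race is a permutation of the candidates, so
it hands out `∑ j s_j = k(1-k²)/6` in total, and the average total is `n(1-k²)/6`; the gap between
the two bounds is `n(k-1)(k-2)/12 ≥ 0`. A candidate strictly below the average is beaten by someone.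
-/

open Finset

/-- Total score of candidate `a`: in race `i`, `P i` sends each candidate to their
(0-indexed) finishing position, which is worth `s` points. -/
def TotalScore {n k : ℕ} (s : Fin k → ℝ) (P : Fin n → Equiv.Perm (Fin k)) (a : Fin k) : ℝ :=
  ∑ i, s (P i a)

section TotalScore

variable {n k : ℕ} {s : Fin k → ℝ} (P : Fin n → Equiv.Perm (Fin k))

theorem sum_totalScore : ∑ a, TotalScore s P a = n * ∑ j, s j := by
  calc ∑ a, TotalScore s P a = ∑ i, ∑ a, s (P i a) := sum_comm
    _ = ∑ _i : Fin n, ∑ j, s j := by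
      refine sum_congr rfl fun i _ => Fintype.sum_equiv (P i) _ _ fun _ => rfl
    _ = n * ∑ j, s j := by simp

theorem totalScore_le_card_mul (hs : ∀ j, s j ≤ 0) (c : Fin k) {F : Finset (Fin n)} {x : ℝ}
    (hF : ∀ i ∈ F, s (P i c) = x) : TotalScore s P c ≤ #F * x :=
  calc TotalScore s P c = ∑ i ∈ F, s (P i c) + ∑ i ∈ Fᶜ, s (P i c) :=
        (sum_add_sum_compl F _).symm
    _ ≤ ∑ i ∈ F, s (P i c) + 0 := by gcongr; exact sum_nonpos fun i _ => hs _
    _ = #F * x := by rw [add_zero, sum_congr rfl hF, sum_const, nsmul_eq_mul]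

theorem totalScore_lt_half_mul (hs : ∀ j, s j ≤ 0) (c : Fin k) {F : Finset (Fin n)} {x : ℝ}
    (hx : x < 0) (hF : ∀ i ∈ F, s (P i c) = x) (hmaj : n < 2 * #F) :
    TotalScore s P c < n * x / 2 := by
  have hmaj' : (n : ℝ) < 2 * #F := by exact_mod_cast hmaj
  have := mul_lt_mul_of_neg_right hmaj' hx
  linarith [totalScore_le_card_mul P hs c hF]

theorem exists_totalScore_gt {c : Fin k}
    (hc : TotalScore s P c < (∑ a, TotalScore s P a) / k) :
    ∃ b, TotalScore s P c < TotalScore s P b := by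
  have hk : (0 : ℝ) < k := by exact_mod_cast c.pos
  have hsum : ∑ _a : Fin k, TotalScore s P c < ∑ a, TotalScore s P a := by
    rw [sum_const, card_univ, Fintype.card_fin, nsmul_eq_mul]
    rwa [lt_div_iff₀' hk] at hc
  obtain ⟨b, -, hb⟩ := exists_lt_of_sum_lt hsum
  exact ⟨b, hb⟩

end TotalScore

/-- The paper's score `-j(j-1)/2` of the 1-indexed position `j`, shifted to 0-indexed positions. -/
noncomputable def triangularScore (k : ℕ) (j : Fin k) : ℝ :=
  -(((j : ℕ) : ℝ) * (((j : ℕ) : ℝ) + 1)) / 2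

theorem triangularScore_nonpos {k : ℕ} (j : Fin k) : triangularScore k j ≤ 0 := by
  unfold triangularScore
  have : (0 : ℝ) ≤ ((j : ℕ) : ℝ) * (((j : ℕ) : ℝ) + 1) := by positivity
  linarith

theorem triangularScore_of_val_eq_sub_one {k : ℕ} (hk : 1 ≤ k) {j : Fin k}
    (hj : (j : ℕ) = k - 1) :
    triangularScore k j = -((k : ℝ) * ((k : ℝ) - 1)) / 2 := by
  rw [triangularScore, hj, Nat.cast_sub hk]
  push_cast
  ring

theorem sum_range_mul_succ (k : ℕ) :
    ∑ j ∈ range k, (j : ℝ) * ((j : ℝ) + 1) = k * ((k : ℝ) ^ 2 - 1) / 3 := by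
  induction k with
  | zero => simp
  | succ m ih => rw [sum_range_succ, ih]; push_cast; ring

theorem sum_triangularScore (k : ℕ) : ∑ j, triangularScore k j = k * (1 - (k : ℝ) ^ 2) / 6 := by
  unfold triangularScore
  rw [Fin.sum_univ_eq_sum_range (fun j => -((j : ℝ) * ((j : ℝ) + 1)) / 2), ← sum_div,
    sum_neg_distrib, sum_range_mul_succ]
  ring

theorem neg_mul_mul_sub_one_div_four_le (n k : ℕ) :
    -((n : ℝ) * k * (k - 1)) / 4 ≤ n * (1 - (k : ℝ) ^ 2) / 6 := by
  have hk : (0 : ℝ) ≤ ((k : ℝ) - 1) * ((k : ℝ) - 2) := by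
    rcases k with _ | _ | k
    · norm_num
    · norm_num
    · push_cast; nlinarith
  nlinarith [mul_nonneg (Nat.cast_nonneg n : (0 : ℝ) ≤ n) hk]

/-- The scoring rule with score `-j(j-1)/2` for (1-indexed) position `j`, i.e.
`-(j₀+1)j₀/2` for 0-indexed position `j₀`, never ranks a majority loser first: the majority
loser's total over `n` races is strictly below `-n·k(k-1)/4`, which is at most the average
total `n(1-k²)/6`, for all `k ≥ 2`. -/
theorem stmt18 (k n : ℕ) (hk : 2 ≤ k) (P : Fin n → Equiv.Perm (Fin k)) (c : Fin k)
    (hml : 2 * (Finset.univ.filter fun i => (P i c : ℕ) = k - 1).card > n) :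
    TotalScore (fun j : Fin k => -(((j : ℕ) : ℝ) * (((j : ℕ) : ℝ) + 1)) / 2) P c <
      -((n : ℝ) * (k : ℝ) * ((k : ℝ) - 1)) / 4 ∧
    -((n : ℝ) * (k : ℝ) * ((k : ℝ) - 1)) / 4 ≤ (n : ℝ) * (1 - (k : ℝ) ^ 2) / 6 ∧
    (∑ a, TotalScore (fun j : Fin k => -(((j : ℕ) : ℝ) * (((j : ℕ) : ℝ) + 1)) / 2) P a)
        / (k : ℝ) = (n : ℝ) * (1 - (k : ℝ) ^ 2) / 6 ∧
    ∃ b : Fin k,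
      TotalScore (fun j : Fin k => -(((j : ℕ) : ℝ) * (((j : ℕ) : ℝ) + 1)) / 2) P c <
        TotalScore (fun j : Fin k => -(((j : ℕ) : ℝ) * (((j : ℕ) : ℝ) + 1)) / 2) P b := by
  change TotalScore (triangularScore k) P c < _ ∧ _ ∧
    (∑ a, TotalScore (triangularScore k) P a) / _ = _ ∧
    ∃ b, TotalScore (triangularScore k) P c < TotalScore (triangularScore k) P b
  have hlast : -((k : ℝ) * ((k : ℝ) - 1)) / 2 < 0 := by
    have : (2 : ℝ) ≤ k := by exact_mod_cast hk
    nlinarith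
  have hloser : TotalScore (triangularScore k) P c < -((n : ℝ) * k * (k - 1)) / 4 := by
    have := totalScore_lt_half_mul P triangularScore_nonpos c hlast
      (fun i hi => triangularScore_of_val_eq_sub_one (by omega) (mem_filter.mp hi).2) hml
    linarith
  have hbound := neg_mul_mul_sub_one_div_four_le n k
  have havg : (∑ a, TotalScore (triangularScore k) P a) / k = n * (1 - (k : ℝ) ^ 2) / 6 := by
    rw [sum_totalScore, sum_triangularScore]
    field_simp
  exact ⟨hloser, hbound, havg,
    exists_totalScore_gt P (havg ▸ hloser.trans_le hbound)⟩
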